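/- arXiv:1408.0658 — 2 statements merged into one kernel-verified Lean document; each statement's English description precedes it below -/
import Mathlib

section
/- Let v : ℝⁿ → ℂ be a trigonometric polynomial, v(x) = Σ_{j=1}^N a_j e^{2πi λ_j·x}, and g ∈ C_0(ℝⁿ). Then lim_{R→+∞} R^{-n} ∫_{ℝⁿ} v(x) g(x/R) dx = (∫_{ℝⁿ} g(y) dy) · M(v), where M(v) = lim_{R→+∞} R^{-n} ∫_{C_R} v(x) dx is the mean value of v (equal to the coefficient a_j attached to λ_j = 0 if present, and 0 otherwise). -/
open MeasureTheory Filter Topology Real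

noncomputable def dotCLM {n : ℕ} (l : Fin n → ℝ) : (Fin n → ℝ) →L[ℝ] ℝ :=
  ∑ i, l i • ContinuousLinearMap.proj i

lemma dotCLM_apply {n : ℕ} (l : Fin n → ℝ) (v : Fin n → ℝ) :
    dotCLM l v = ∑ i, l i * v i := by
  simp [dotCLM]

lemma dotCLM_ne_zero {n : ℕ} {l : Fin n → ℝ} (hl : l ≠ 0) : dotCLM l ≠ 0 := by
  obtain ⟨i, hi⟩ := Function.ne_iff.mp hl
  intro h
  apply hi
  have := congrArg (fun L : (Fin n → ℝ) →L[ℝ] ℝ => L (Pi.single i 1)) h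
  simpa [dotCLM_apply, Pi.single_apply, mul_ite, Finset.sum_ite_eq'] using this

lemma RL {n : ℕ} (g : (Fin n → ℝ) → ℂ) {l : Fin n → ℝ} (hl : l ≠ 0) :
    Tendsto (fun R : ℝ => ∫ y : Fin n → ℝ,
        Complex.exp (2 * (π : ℂ) * Complex.I * ((R * ∑ i, l i * y i : ℝ) : ℂ)) * g y)
      atTop (𝓝 0) := by
  have hcc : Tendsto (fun R : ℝ => R • (-(dotCLM l))) atTop
      (cocompact ((Fin n → ℝ) →L[ℝ] ℝ)) := by
    rw [← Metric.cobounded_eq_cocompact, ← tendsto_norm_atTop_iff_cobounded]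
    have h1 : Tendsto (fun R : ℝ => |R| * ‖(-(dotCLM l))‖) atTop atTop :=
      tendsto_abs_atTop_atTop.atTop_mul_const (by simpa using dotCLM_ne_zero hl)
    simpa [norm_smul] using h1
  have := (tendsto_integral_exp_smul_cocompact g (volume : Measure (Fin n → ℝ))).comp hcc
  convert this using 2 with R
  congr 1 with y
  rw [Circle.smul_def, Real.fourierChar_apply]
  simp only [ContinuousLinearMap.smul_apply, ContinuousLinearMap.neg_apply, dotCLM_apply,
    smul_eq_mul, mul_neg, neg_neg]
  push_cast
  ring_nf

/-- For a trigonometric polynomial `v x = Σ_j a_j e^{2πi λ_j·x}` and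
`g ∈ C_0(ℝⁿ)`, `R^{-n} ∫ v(x) g(x/R) dx → (∫ g) · M(v)` where the mean value `M(v)`
equals the sum of the coefficients attached to `λ_j = 0`. -/
theorem stmt4 (n N : ℕ) (a : Fin N → ℂ) (lam : Fin N → (Fin n → ℝ))
    (g : (Fin n → ℝ) → ℂ) (hgc : Continuous g) (hgs : HasCompactSupport g) :
    Tendsto (fun R : ℝ =>
        ((R : ℂ) ^ n)⁻¹ *
          ∫ x, (∑ j, a j *
              Complex.exp (2 * (π : ℂ) * Complex.I * ((∑ i, lam j i * x i : ℝ) : ℂ))) *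
            g (R⁻¹ • x))
      atTop (𝓝 ((∫ y, g y) * ∑ j, if lam j = 0 then a j else 0)) := by
  classical
  -- integrability of the pieces
  have hint : ∀ (R : ℝ) (j : Fin N), Integrable (fun y : Fin n → ℝ =>
      Complex.exp (2 * (π : ℂ) * Complex.I * ((R * ∑ i, lam j i * y i : ℝ) : ℂ)) * g y) := by
    intro R j
    apply Continuous.integrable_of_hasCompactSupport
    · exact (Complex.continuous_exp.comp (by fun_prop)).mul hgc
    · exact hgs.mul_left
  -- step 1: eventual equality with the rescaled sum
  have key : ∀ᶠ R : ℝ in atTop,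
      ((R : ℂ) ^ n)⁻¹ *
          ∫ x, (∑ j, a j *
              Complex.exp (2 * (π : ℂ) * Complex.I * ((∑ i, lam j i * x i : ℝ) : ℂ))) *
            g (R⁻¹ • x)
      = ∑ j, a j * ∫ y : Fin n → ℝ,
          Complex.exp (2 * (π : ℂ) * Complex.I * ((R * ∑ i, lam j i * y i : ℝ) : ℂ)) * g y := by
    filter_upwards [eventually_gt_atTop 0] with R hR
    set f : (Fin n → ℝ) → ℂ := fun x =>
      (∑ j, a j * Complex.exp (2 * (π : ℂ) * Complex.I * ((∑ i, lam j i * x i : ℝ) : ℂ))) *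
        g (R⁻¹ • x) with hf
    have hcv := MeasureTheory.Measure.integral_comp_smul_of_nonneg
      (volume : Measure (Fin n → ℝ)) f R (hR := hR.le)
    have hcomp : (fun y : Fin n → ℝ => f (R • y)) = fun y : Fin n → ℝ =>
        (∑ j, a j * Complex.exp (2 * (π : ℂ) * Complex.I * ((R * ∑ i, lam j i * y i : ℝ) : ℂ))) *
          g y := by
      funext y
      have h1 : R⁻¹ • R • y = y := by
        rw [smul_smul, inv_mul_cancel₀ hR.ne', one_smul]
      have h2 : ∀ j, (∑ i, lam j i * (R • y) i) = R * ∑ i, lam j i * y i := by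
        intro j
        rw [Finset.mul_sum]
        refine Finset.sum_congr rfl fun i _ => ?_
        simp only [Pi.smul_apply, smul_eq_mul]
        ring
      simp only [hf, h1, h2]
    rw [hcomp] at hcv
    have hsum : ∫ y : Fin n → ℝ,
        (∑ j, a j * Complex.exp (2 * (π : ℂ) * Complex.I * ((R * ∑ i, lam j i * y i : ℝ) : ℂ))) *
          g y
        = ∑ j, a j * ∫ y : Fin n → ℝ,
            Complex.exp (2 * (π : ℂ) * Complex.I * ((R * ∑ i, lam j i * y i : ℝ) : ℂ)) * g y := by
      have hdist : ∀ y : Fin n → ℝ,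
          (∑ j, a j * Complex.exp (2 * (π : ℂ) * Complex.I * ((R * ∑ i, lam j i * y i : ℝ) : ℂ))) * g y
          = ∑ j, a j * (Complex.exp (2 * (π : ℂ) * Complex.I * ((R * ∑ i, lam j i * y i : ℝ) : ℂ)) * g y) := by
        intro y
        rw [Finset.sum_mul]
        exact Finset.sum_congr rfl fun j _ => mul_assoc _ _ _
      simp_rw [hdist]
      rw [integral_finset_sum _ (fun j _ => ((hint R j).const_mul (a j)))]
      exact Finset.sum_congr rfl fun j _ => integral_const_mul _ _
    have hRn : ((R : ℂ) ^ n) ≠ 0 := pow_ne_zero _ (by exact_mod_cast hR.ne')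
    have hfin : Module.finrank ℝ (Fin n → ℝ) = n := by simp
    rw [hfin] at hcv
    rw [← hsum, hcv, Complex.real_smul]
    push_cast
    ring
  -- step 2: limit of the RHS
  refine Tendsto.congr' (Filter.EventuallyEq.symm key) ?_
  have hlim : Tendsto (fun R : ℝ => ∑ j, a j * ∫ y : Fin n → ℝ,
      Complex.exp (2 * (π : ℂ) * Complex.I * ((R * ∑ i, lam j i * y i : ℝ) : ℂ)) * g y)
      atTop (𝓝 (∑ j, if lam j = 0 then a j * ∫ y, g y else 0)) := by
    apply tendsto_finset_sum
    intro j _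
    by_cases hj : lam j = 0
    · rw [if_pos hj]
      refine Tendsto.congr (f₁ := fun _ : ℝ => a j * ∫ y : Fin n → ℝ, g y) (fun R => ?_) tendsto_const_nhds
      simp [hj]
    · simp only [hj, if_neg, if_false]
      simpa using (RL g hj).const_mul (a j)
  convert hlim using 2
  rw [Finset.mul_sum]
  refine Finset.sum_congr rfl fun j _ => ?_
  by_cases hj : lam j = 0 <;> simp [hj, mul_comm]
end

section
/- Let u, v, w be real numbers and φ : ℝ → ℝⁿ continuous with modulus of continuity ω on [−M, M] (so |φ(a) − φ(b)| ≤ ω(|a − b|) for a, b ∈ [−M, M]). Then for all a, b, c ∈ [−M, M]: | sign(a − b)(φ(a) − φ(b)) − sign(a − c)(φ(a) − φ(c)) | ≤ 2 ω(|b − c|). -/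
lemma abs_sign_le_one (x : ℝ) : |Real.sign x| ≤ 1 := by
  rcases lt_trichotomy x 0 with h | h | h
  · rw [Real.sign_of_neg h]; norm_num
  · rw [h, Real.sign_zero]; norm_num
  · rw [Real.sign_of_pos h]; norm_num

/-- Kruzhkov doubling-of-variables inequalities. If `ω` is a (monotone)
modulus of continuity of `φ : ℝ → ℝⁿ` on `[−M, M]`, then for `a, b, c ∈ [−M, M]`,
`‖sign(a−b)(φ(a)−φ(b)) − sign(a−c)(φ(a)−φ(c))‖ ≤ 2 ω(|b−c|)`, together with the
companion `||a−b| − |a−c|| ≤ |b−c|`. -/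
theorem stmt14 (n : ℕ) (M : ℝ) (hM : 0 ≤ M)
    (φ : ℝ → EuclideanSpace ℝ (Fin n)) (hφ : Continuous φ)
    (ω : ℝ → ℝ) (hω0 : ω 0 = 0) (hωmono : Monotone ω)
    (hmod : ∀ a ∈ Set.Icc (-M) M, ∀ b ∈ Set.Icc (-M) M, ‖φ a - φ b‖ ≤ ω |a - b|) :
    ∀ a ∈ Set.Icc (-M) M, ∀ b ∈ Set.Icc (-M) M, ∀ c ∈ Set.Icc (-M) M,
      ‖Real.sign (a - b) • (φ a - φ b) - Real.sign (a - c) • (φ a - φ c)‖ ≤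
        2 * ω |b - c| ∧
      |(|a - b| - |a - c|)| ≤ |b - c| := by
  intro a ha b hb c hc
  have hωnn : ∀ r : ℝ, 0 ≤ r → 0 ≤ ω r := fun r hr => hω0 ▸ hωmono hr
  have hbc : (0:ℝ) ≤ ω |b - c| := hωnn _ (abs_nonneg _)
  constructor
  · by_cases hst : Real.sign (a - b) = Real.sign (a - c)
    · have heq : Real.sign (a - b) • (φ a - φ b) - Real.sign (a - c) • (φ a - φ c)
          = Real.sign (a - c) • (φ c - φ b) := by
        rw [hst, ← smul_sub]; congr 1; abel
      rw [heq, norm_smul]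
      have h1 : ‖φ c - φ b‖ ≤ ω |b - c| := by
        have := hmod c hc b hb
        rwa [abs_sub_comm] at this
      have h2 : (0:ℝ) ≤ ‖φ c - φ b‖ := norm_nonneg _
      have h3 := abs_sign_le_one (a - c)
      have h4 := abs_nonneg (Real.sign (a - c))
      calc ‖Real.sign (a - c)‖ * ‖φ c - φ b‖ = |Real.sign (a - c)| * ‖φ c - φ b‖ := by
            rw [Real.norm_eq_abs]
        _ ≤ 1 * ω |b - c| := mul_le_mul h3 h1 h2 zero_le_one
        _ ≤ 2 * ω |b - c| := by linarith
    · -- signs differ, so |a−b| ≤ |b−c| and |a−c| ≤ |b−c|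
      have key : |a - b| ≤ |b - c| ∧ |a - c| ≤ |b - c| := by
        rcases lt_trichotomy a b with h1 | h1 | h1 <;>
          rcases lt_trichotomy a c with h2 | h2 | h2 <;>
          [ (exact absurd (by rw [Real.sign_of_neg (by linarith : a - b < 0),
              Real.sign_of_neg (by linarith : a - c < 0)]) hst);
            skip; skip; skip;
            (exact absurd (by rw [show a - b = 0 by linarith, show a - c = 0 by linarith]) hst);
            skip; skip; skip;
            (exact absurd (by rw [Real.sign_of_pos (by linarith : 0 < a - b),
              Real.sign_of_pos (by linarith : 0 < a - c)]) hst) ] <;>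
          constructor <;>
          · rw [abs_le]; constructor <;>
            · cases abs_cases (b - c) with
              | inl h => linarith [h.1]
              | inr h => linarith [h.1]
      have n1 : ‖φ a - φ b‖ ≤ ω |b - c| := le_trans (hmod a ha b hb) (hωmono key.1)
      have n2 : ‖φ a - φ c‖ ≤ ω |b - c| := le_trans (hmod a ha c hc) (hωmono key.2)
      have h3 := abs_sign_le_one (a - b)
      have h4 := abs_sign_le_one (a - c)
      calc ‖Real.sign (a - b) • (φ a - φ b) - Real.sign (a - c) • (φ a - φ c)‖
          ≤ ‖Real.sign (a - b) • (φ a - φ b)‖ + ‖Real.sign (a - c) • (φ a - φ c)‖ :=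
            norm_sub_le _ _
        _ = |Real.sign (a - b)| * ‖φ a - φ b‖ + |Real.sign (a - c)| * ‖φ a - φ c‖ := by
            rw [norm_smul, norm_smul, Real.norm_eq_abs, Real.norm_eq_abs]
        _ ≤ 1 * ω |b - c| + 1 * ω |b - c| := by
            exact add_le_add (mul_le_mul h3 n1 (norm_nonneg _) zero_le_one)
              (mul_le_mul h4 n2 (norm_nonneg _) zero_le_one)
        _ ≤ 2 * ω |b - c| := by linarith
  · have := abs_abs_sub_abs_le_abs_sub (a - b) (a - c)
    calc |(|a - b| - |a - c|)| ≤ |(a - b) - (a - c)| := this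
      _ = |c - b| := by ring_nf
      _ = |b - c| := abs_sub_comm _ _
end
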